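/- Let I = {1,…,N} be a finite index set, θ ∈ ℝ a threshold, m > 0, A ≥ 0 a real number, v : I → ℝ potentials, and H : I × I → ℝ synaptic weights with H j i ≥ m for all i, j ∈ I. If the fired set J of the firing cascade satisfies Card(J) ≥ A and v i + m·A ≥ θ for every i ∈ I, then J = I. -/

import Mathlib

open Finset

open scoped Classical in
/-- Cumulative union `⋃_{q ≤ p} J^q` of the firing cascade. -/
noncomputable def cumFired {N : ℕ} (θ : ℝ) (v : Fin N → ℝ) (H : Fin N → Fin N → ℝ) :
    ℕ → Finset (Fin N)
  | 0 => Finset.univ.filter (fun i => θ ≤ v i)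
  | p + 1 =>
      cumFired θ v H p ∪
        Finset.univ.filter
          (fun i => i ∉ cumFired θ v H p ∧ θ ≤ v i + ∑ j ∈ cumFired θ v H p, H j i)

open scoped Classical in
/-- The set `J^p` of neurons firing at step `p` of the cascade:
`J⁰ = {i : v i ≥ θ}` and
`J^{p+1} = {i ∉ ⋃_{q ≤ p} J^q : v i + ∑_{j ∈ ⋃_{q ≤ p} J^q} H j i ≥ θ}`. -/
noncomputable def fireStep {N : ℕ} (θ : ℝ) (v : Fin N → ℝ) (H : Fin N → Fin N → ℝ) :
    ℕ → Finset (Fin N)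
  | 0 => Finset.univ.filter (fun i => θ ≤ v i)
  | p + 1 =>
      Finset.univ.filter
        (fun i => i ∉ cumFired θ v H p ∧ θ ≤ v i + ∑ j ∈ cumFired θ v H p, H j i)

/-- The fired set `J = ⋃_{p ∈ ℕ} J^p`. -/
def firedSet {N : ℕ} (θ : ℝ) (v : Fin N → ℝ) (H : Fin N → Fin N → ℝ) : Set (Fin N) :=
  {i | ∃ p : ℕ, i ∈ fireStep θ v H p}

/-!
The cumulative fired sets form an increasing sequence of subsets of a finite set, so the cascade
stops, and its fired set `J` is closed under the firing rule: any `i` with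
`v i + ∑_{j ∈ J} H j i ≥ θ` already lies in `J`. Every neuron meets this bound, since the sum is
at least `m |J| ≥ m A`.
-/

section Cascade

variable {N : ℕ} (θ : ℝ) (v : Fin N → ℝ) (H : Fin N → Fin N → ℝ)

theorem cumFired_succ (p : ℕ) :
    cumFired θ v H (p + 1) = cumFired θ v H p ∪ fireStep θ v H (p + 1) :=
  rfl

theorem cumFired_mono : Monotone (cumFired θ v H) :=
  monotone_nat_of_le_succ fun p => by rw [cumFired_succ]; exact subset_union_left

theorem fireStep_subset_cumFired (p : ℕ) : fireStep θ v H p ⊆ cumFired θ v H p := by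
  cases p with
  | zero => exact subset_rfl
  | succ p => rw [cumFired_succ]; exact subset_union_right

theorem mem_firedSet_iff_exists_mem_cumFired {i : Fin N} :
    i ∈ firedSet θ v H ↔ ∃ p, i ∈ cumFired θ v H p := by
  refine ⟨fun ⟨p, hp⟩ => ⟨p, fireStep_subset_cumFired θ v H p hp⟩, fun ⟨p, hp⟩ => ?_⟩
  induction p with
  | zero => exact ⟨0, hp⟩
  | succ p ih =>
    rw [cumFired_succ, mem_union] at hp
    exact hp.elim ih fun h => ⟨p + 1, h⟩

theorem exists_firedSet_eq_cumFired :
    ∃ P, firedSet θ v H = cumFired θ v H P ∧ cumFired θ v H (P + 1) = cumFired θ v H P := by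
  obtain ⟨P, hP⟩ : ∃ P, ∀ q, P ≤ q → cumFired θ v H P = cumFired θ v H q :=
    WellFoundedGT.monotone_chain_condition ⟨cumFired θ v H, cumFired_mono θ v H⟩
  refine ⟨P, Set.ext fun i => ?_, (hP (P + 1) P.le_succ).symm⟩
  rw [mem_firedSet_iff_exists_mem_cumFired, mem_coe]
  refine ⟨fun ⟨q, hq⟩ => ?_, fun hi => ⟨P, hi⟩⟩
  rcases le_total P q with hPq | hqP
  · rwa [← hP q hPq] at hq
  · exact cumFired_mono θ v H hqP hq

open scoped Classical in
theorem mem_firedSet_of_le_add_sum {i : Fin N}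
    (hi : θ ≤ v i + ∑ j ∈ (firedSet θ v H).toFinset, H j i) : i ∈ firedSet θ v H := by
  obtain ⟨P, hJ, hstable⟩ := exists_firedSet_eq_cumFired θ v H
  simp only [hJ, toFinset_coe, mem_coe] at hi ⊢
  by_contra hiP
  have hfire : i ∈ fireStep θ v H (P + 1) := by
    simp only [fireStep, mem_filter, mem_univ, true_and]
    exact ⟨hiP, hi⟩
  exact hiP (hstable ▸ fireStep_subset_cumFired θ v H (P + 1) hfire)

end Cascade

open scoped Classical in
theorem full_synchronization_of_card_fired_general {N : ℕ} (θ m A : ℝ) (hm : 0 < m)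
    (v : Fin N → ℝ) (H : Fin N → Fin N → ℝ)
    (hH : ∀ i j : Fin N, m ≤ H j i)
    (hcard : A ≤ ((firedSet θ v H).ncard : ℝ))
    (hv : ∀ i : Fin N, θ ≤ v i + m * A) :
    firedSet θ v H = Set.univ := by
  refine Set.eq_univ_of_forall fun i => mem_firedSet_of_le_add_sum θ v H ?_
  have hsum : (firedSet θ v H).ncard * m ≤ ∑ j ∈ (firedSet θ v H).toFinset, H j i := by
    rw [Set.ncard_eq_toFinset_card', ← nsmul_eq_mul]
    exact card_nsmul_le_sum _ _ _ fun j _ => hH i j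
  calc θ ≤ v i + m * A := hv i
    _ ≤ v i + m * (firedSet θ v H).ncard := by gcongr
    _ ≤ v i + ∑ j ∈ (firedSet θ v H).toFinset, H j i := by linarith

/-- If the fired set `J` of the cascade has cardinality at least `A ≥ 0` and every
potential satisfies `v i + m A ≥ θ`, with all synaptic weights at least `m > 0`,
then the whole network fires: `J = I`. -/
theorem full_synchronization_of_card_fired {N : ℕ} (θ m A : ℝ) (hm : 0 < m) (hA : 0 ≤ A)
    (v : Fin N → ℝ) (H : Fin N → Fin N → ℝ)
    (hH : ∀ i j : Fin N, m ≤ H j i)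
    (hcard : A ≤ ((firedSet θ v H).ncard : ℝ))
    (hv : ∀ i : Fin N, θ ≤ v i + m * A) :
    firedSet θ v H = Set.univ :=
  full_synchronization_of_card_fired_general θ m A hm v H hH hcard hv
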